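/- If X₁, …, X_k are independent real random variables with X_i ≤ b almost surely for a constant b > 0, S = ∑_{i=1}^k (X_i − E[X_i]) and v = ∑_{i=1}^k E[X_i²], then for all t ≥ 0, P(S ≥ t) ≤ exp(−t² / (2v + (2/3)bt)). -/

import Mathlib

/-!
Chernoff's method. For `0 ≤ x < 3` the exponential series is dominated termwise by
`1 + x + (x²/2) ∑ (x/3)ⁿ`, and for `x ≤ 0` one has `exp x ≤ 1 + x + x²/2`; hence `X ≤ b` gives
`exp (λX) ≤ 1 + λX + λ²X² / (2(1 - λb/3))` whenever `λb < 3`. Taking expectations, each centred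
summand has moment generating function at most `exp (λ² E[X²] / (2(1 - λb/3)))`, independence
multiplies these bounds, and Markov's inequality gives
`P(S ≥ t) ≤ exp (-λt + λ²v / (2(1 - λb/3)))`, which at `λ = t / (v + bt/3)` is the claimed bound.
-/

open MeasureTheory ProbabilityTheory Real Finset

namespace Real

lemma exp_le_one_add_add_sq_div_two_of_nonpos {u : ℝ} (hu : u ≤ 0) :
    exp u ≤ 1 + u + u ^ 2 / 2 := by
  have h := quadratic_le_exp_of_nonneg (neg_nonneg.2 hu)
  -- `(1 + u + u²/2)(1 - u + u²/2) = 1 + u⁴/4` and `1 - u + u²/2 ≤ exp (-u)`.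
  have hprod : exp u * exp (-u) = 1 := by rw [← exp_add, add_neg_cancel, exp_zero]
  nlinarith [exp_pos u, sq_nonneg (u ^ 2), sq_nonneg (u + 1)]

lemma exp_le_one_add_add_sq_div_of_lt_three {x : ℝ} (hx₀ : 0 ≤ x) (hx : x < 3) :
    exp x ≤ 1 + x + x ^ 2 / (2 * (1 - x / 3)) := by
  have hexp : HasSum (fun n : ℕ => x ^ n / n.factorial) (exp x) := by
    rw [exp_eq_exp_ℝ]; exact NormedSpace.expSeries_div_hasSum_exp x
  have hgeom : HasSum (fun n : ℕ => x ^ 2 / 2 * (x / 3) ^ n) (x ^ 2 / (2 * (1 - x / 3))) := by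
    have := (hasSum_geometric_of_lt_one (r := x / 3) (by positivity) (by linarith)).mul_left
      (x ^ 2 / 2)
    rwa [← div_eq_mul_inv, div_div] at this
  have htail : ∑' n : ℕ, x ^ (n + 2) / (n + 2).factorial ≤ x ^ 2 / (2 * (1 - x / 3)) := by
    refine hgeom.tsum_eq ▸ ((summable_nat_add_iff 2).2 hexp.summable).tsum_le_tsum
      (fun n => ?_) hgeom.summable
    -- `2 · 3ⁿ ≤ (n + 2)!` makes the tail of the series geometric.
    have hfact : (2 * 3 ^ n : ℝ) ≤ (n + 2).factorial := by
      have := @Nat.factorial_mul_pow_le_factorial 2 n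
      rw [add_comm 2 n] at this
      exact_mod_cast this
    calc x ^ (n + 2) / (n + 2).factorial ≤ x ^ (n + 2) / (2 * 3 ^ n) :=
          div_le_div_of_nonneg_left (by positivity) (by positivity) hfact
      _ = x ^ 2 / 2 * (x / 3) ^ n := by rw [div_pow]; ring
  rw [← hexp.tsum_eq, ← hexp.summable.sum_add_tsum_nat_add 2]
  simpa [Finset.sum_range_succ, add_assoc] using htail

lemma exp_le_one_add_add_sq_div_of_le {u c : ℝ} (hc₀ : 0 ≤ c) (hc : c < 3) (hu : u ≤ c) :
    exp u ≤ 1 + u + u ^ 2 / (2 * (1 - c / 3)) := by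
  have hden : 0 < 2 * (1 - c / 3) := by linarith
  rcases le_total u 0 with hu₀ | hu₀
  · calc exp u ≤ 1 + u + u ^ 2 / 2 := exp_le_one_add_add_sq_div_two_of_nonpos hu₀
      _ ≤ 1 + u + u ^ 2 / (2 * (1 - c / 3)) := by
        gcongr; linarith
  · calc exp u ≤ 1 + u + u ^ 2 / (2 * (1 - u / 3)) :=
          exp_le_one_add_add_sq_div_of_lt_three hu₀ (hu.trans_lt hc)
      _ ≤ 1 + u + u ^ 2 / (2 * (1 - c / 3)) := by
        gcongr

end Real

namespace ProbabilityTheory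

variable {Ω : Type*} [MeasurableSpace Ω] {μ : Measure Ω}

lemma integrable_exp_mul_of_ae_le [IsFiniteMeasure μ] {X : Ω → ℝ} {l b : ℝ}
    (hX : AEMeasurable X μ) (hl : 0 ≤ l) (hXb : ∀ᵐ ω ∂μ, X ω ≤ b) :
    Integrable (fun ω => exp (l * X ω)) μ := by
  refine Integrable.mono' (integrable_const (exp (l * b)))
    (hX.const_mul l).exp.aestronglyMeasurable ?_
  filter_upwards [hXb] with ω hω
  rw [norm_of_nonneg (exp_pos _).le]
  gcongr

lemma iIndepFun.integrable_exp_mul_sum₀ [IsFiniteMeasure μ] {ι : Type*} {X : ι → Ω → ℝ}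
    (hindep : iIndepFun X μ) (hX : ∀ i, AEMeasurable (X i) μ) {l : ℝ} {s : Finset ι}
    (hint : ∀ i ∈ s, Integrable (fun ω => exp (l * X i ω)) μ) :
    Integrable (fun ω => exp (l * (∑ i ∈ s, X i) ω)) μ := by
  classical
  induction s using Finset.induction_on with
  | empty => simp
  | insert i s hi ih =>
    rw [sum_insert hi]
    exact ((hindep.indepFun_finsetSum_of_notMem₀ hX hi).symm.integrable_exp_mul_add
      (hint i (mem_insert_self i s)) (ih fun j hj => hint j (mem_insert_of_mem hj)))

lemma iIndepFun.measureReal_sum_ge_le [IsFiniteMeasure μ] {ι : Type*} {X : ι → Ω → ℝ}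
    (hindep : iIndepFun X μ) (hX : ∀ i, AEMeasurable (X i) μ) {l : ℝ} (hl : 0 ≤ l)
    {s : Finset ι} (hint : ∀ i ∈ s, Integrable (fun ω => exp (l * X i ω)) μ) {c : ι → ℝ}
    (hc : ∀ i ∈ s, mgf (X i) μ l ≤ exp (c i)) (t : ℝ) :
    μ.real {ω | t ≤ ∑ i ∈ s, X i ω} ≤ exp (-l * t + ∑ i ∈ s, c i) := by
  calc μ.real {ω | t ≤ ∑ i ∈ s, X i ω} = μ.real {ω | t ≤ (∑ i ∈ s, X i) ω} := by
        simp only [Finset.sum_apply]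
    _ ≤ exp (-l * t) * mgf (∑ i ∈ s, X i) μ l :=
        measure_ge_le_exp_mul_mgf t hl (hindep.integrable_exp_mul_sum₀ hX hint)
    _ ≤ exp (-l * t) * ∏ i ∈ s, exp (c i) := by
        rw [hindep.mgf_sum₀ hX]
        gcongr with i hi
        · exact fun i _ => mgf_nonneg
        · exact hc i hi
    _ = exp (-l * t + ∑ i ∈ s, c i) := by rw [exp_add, exp_sum]

lemma mgf_sub_integral_le [IsProbabilityMeasure μ] {X : Ω → ℝ} {b l : ℝ} (hb : 0 ≤ b)
    (hl : 0 ≤ l) (hlb : l * b < 3) (hXb : ∀ᵐ ω ∂μ, X ω ≤ b) (hX : Integrable X μ)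
    (hX2 : Integrable (fun ω => X ω ^ 2) μ) :
    mgf (fun ω => X ω - μ[X]) μ l ≤
      exp (l ^ 2 / (2 * (1 - l * b / 3)) * μ[fun ω => X ω ^ 2]) := by
  set D := l ^ 2 / (2 * (1 - l * b / 3))
  have hpoly : mgf X μ l ≤ 1 + l * μ[X] + D * μ[fun ω => X ω ^ 2] := by
    calc mgf X μ l ≤ ∫ ω, (1 + l * X ω + D * X ω ^ 2) ∂μ := by
          refine integral_mono_ae (integrable_exp_mul_of_ae_le hX.aemeasurable hl hXb)
            (((integrable_const 1).add (hX.const_mul l)).add (hX2.const_mul D)) ?_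
          filter_upwards [hXb] with ω hω
          have hexp := exp_le_one_add_add_sq_div_of_le (by positivity) hlb
            (mul_le_mul_of_nonneg_left hω hl)
          have hD : (l * X ω) ^ 2 / (2 * (1 - l * b / 3)) = D * X ω ^ 2 := by ring
          linarith
      _ = 1 + l * μ[X] + D * μ[fun ω => X ω ^ 2] := by
          have hlin : Integrable (fun ω => 1 + l * X ω) μ :=
            (integrable_const 1).add (hX.const_mul l)
          rw [integral_add hlin (hX2.const_mul D),
            integral_add (integrable_const 1) (hX.const_mul l), integral_const_mul,
            integral_const_mul]
          simp
  calc mgf (fun ω => X ω - μ[X]) μ l = exp (-(l * μ[X])) * mgf X μ l := by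
        simp_rw [sub_eq_add_neg, mgf_add_const, mul_neg, mul_comm]
    _ ≤ exp (-(l * μ[X])) * exp (l * μ[X] + D * μ[fun ω => X ω ^ 2]) := by
        gcongr
        linarith [add_one_le_exp (l * μ[X] + D * μ[fun ω => X ω ^ 2])]
    _ = exp (D * μ[fun ω => X ω ^ 2]) := by rw [← exp_add]; ring_nf

end ProbabilityTheory

lemma exists_bernstein_parameter {b v t : ℝ} (hb : 0 < b) (hv : 0 ≤ v) (ht : 0 ≤ t) :
    ∃ l, 0 ≤ l ∧ l * b < 3 ∧
      -l * t + l ^ 2 / (2 * (1 - l * b / 3)) * v ≤ -t ^ 2 / (2 * v + 2 / 3 * b * t) := by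
  -- The optimal `l = 3t / (3v + bt)` gives equality, but reaches `l * b = 3` when `v = 0`.
  rcases hv.eq_or_lt with rfl | hv
  · refine ⟨2 / b, by positivity, by field_simp; norm_num, ?_⟩
    have hrhs : -t ^ 2 / (2 * 0 + 2 / 3 * b * t) = -(3 / (2 * b)) * t := by
      rcases ht.eq_or_lt with rfl | ht
      · simp
      · field_simp
        ring
    have hl : 3 / (2 * b) ≤ 2 / b := by
      rw [div_le_div_iff₀ (by positivity) hb]
      linarith
    rw [hrhs, mul_zero, add_zero]
    nlinarith
  · refine ⟨3 * t / (3 * v + b * t), by positivity, ?_, le_of_eq ?_⟩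
    · rw [div_mul_eq_mul_div, div_lt_iff₀ (by positivity)]
      nlinarith
    · field_simp
      ring

theorem bernstein_inequality_general
    {Ω : Type*} [MeasurableSpace Ω] (μ : Measure Ω) [IsProbabilityMeasure μ]
    (k : ℕ) (X : Fin k → Ω → ℝ)
    (hindep : ProbabilityTheory.iIndepFun X μ)
    (b : ℝ) (hb : 0 < b)
    (hbd : ∀ i, ∀ᵐ ω ∂μ, X i ω ≤ b)
    (hint : ∀ i, Integrable (X i) μ)
    (hint2 : ∀ i, Integrable (fun ω => (X i ω) ^ 2) μ)
    (t : ℝ) (ht : 0 ≤ t) :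
    (μ {ω | t ≤ ∑ i, (X i ω - ∫ ω', X i ω' ∂μ)}).toReal ≤
      Real.exp (-(t ^ 2) / (2 * (∑ i, ∫ ω', (X i ω') ^ 2 ∂μ) + (2 / 3) * b * t)) := by
  obtain ⟨l, hl, hlb, hexponent⟩ := exists_bernstein_parameter hb
    (sum_nonneg fun i _ => integral_nonneg fun ω => sq_nonneg (X i ω)) ht
  have hcentered : iIndepFun (fun i ω => X i ω - ∫ ω', X i ω' ∂μ) μ :=
    hindep.comp (fun i x => x - ∫ ω', X i ω' ∂μ) fun i => measurable_id.sub_const _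
  calc (μ {ω | t ≤ ∑ i, (X i ω - ∫ ω', X i ω' ∂μ)}).toReal
      ≤ exp (-l * t + ∑ i, l ^ 2 / (2 * (1 - l * b / 3)) * ∫ ω', X i ω' ^ 2 ∂μ) :=
        hcentered.measureReal_sum_ge_le (fun i => (hint i).aemeasurable.sub_const _) hl
          (fun i _ => integrable_exp_mul_of_ae_le ((hint i).aemeasurable.sub_const _) hl
            ((hbd i).mono fun ω hω => sub_le_sub_right hω _))
          (fun i _ => mgf_sub_integral_le hb.le hl hlb (hbd i) (hint i) (hint2 i)) t
    _ ≤ _ := by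
        rw [← mul_sum]
        exact exp_le_exp.2 hexponent

/-- Bennett/Bernstein inequality: if `X₁, …, X_k` are independent real random variables
with finite variance and `X i ≤ b` a.s. for a constant `b > 0`, then with
`S = ∑ (X i − E[X i])` and `v = ∑ E[X i ^ 2]`, for all `t ≥ 0`,
`P(S ≥ t) ≤ exp (−t² / (2 v + (2/3) b t))`. -/
theorem bernstein_inequality
    {Ω : Type*} [MeasurableSpace Ω] (μ : Measure Ω) [IsProbabilityMeasure μ]
    (k : ℕ) (X : Fin k → Ω → ℝ)
    (hmeas : ∀ i, Measurable (X i))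
    (hindep : ProbabilityTheory.iIndepFun X μ)
    (b : ℝ) (hb : 0 < b)
    (hbd : ∀ i, ∀ᵐ ω ∂μ, X i ω ≤ b)
    (hint : ∀ i, Integrable (X i) μ)
    (hint2 : ∀ i, Integrable (fun ω => (X i ω) ^ 2) μ)
    (t : ℝ) (ht : 0 ≤ t) :
    (μ {ω | t ≤ ∑ i, (X i ω - ∫ ω', X i ω' ∂μ)}).toReal ≤
      Real.exp (-(t ^ 2) / (2 * (∑ i, ∫ ω', (X i ω') ^ 2 ∂μ) + (2 / 3) * b * t)) :=
  bernstein_inequality_general μ k X hindep b hb hbd hint hint2 t ht
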